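/- arXiv:0805.3552 — 4 statements merged into one kernel-verified Lean document; each statement's English description precedes it below -/
import Mathlib

section
/- Let μ be a measure on M and A, B, C measurable sets with μ(A Δ B) < ∞ and μ(B Δ C) < ∞. Then μ(A Δ C) < ∞ and J(A,B) + J(B,C) = J(A,C), where J(X,Y) = μ(X \ Y) - μ(Y \ X) (as real numbers). -/
/-!
The sets `A \ B`, `B \ C`, `C \ A` are pairwise disjoint with union
`(A ∪ B ∪ C) \ (A ∩ B ∩ C)`, which is symmetric in `A, B, C`. Hence the two cyclic sums
`μ (A \ B) + μ (B \ C) + μ (C \ A)` and `μ (B \ A) + μ (C \ B) + μ (A \ C)` agree; when all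
terms are finite, rearranging them in `ℝ` is the cocycle identity.
-/

open Set
open scoped symmDiff

namespace MeasureTheory

variable {M : Type*} [MeasurableSpace M] (μ : Measure M) {A B C : Set M}

noncomputable def massTransfer (X Y : Set M) : ℝ :=
  (μ (X \ Y)).toReal - (μ (Y \ X)).toReal

theorem measure_sdiff_ne_top_of_symmDiff (h : μ (A ∆ B) < ⊤) :
    μ (A \ B) ≠ ⊤ ∧ μ (B \ A) ≠ ⊤ :=
  ⟨measure_ne_top_of_subset le_sup_left h.ne, measure_ne_top_of_subset le_sup_right h.ne⟩

theorem measure_diff_add_diff_add_diff (hA : MeasurableSet A) (hB : MeasurableSet B)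
    (hC : MeasurableSet C) :
    μ (A \ B) + μ (B \ C) + μ (C \ A) = μ ((A ∪ B ∪ C) \ (A ∩ B ∩ C)) := by
  have hunion : (A ∪ B ∪ C) \ (A ∩ B ∩ C) = A \ B ∪ B \ C ∪ C \ A := by
    ext x; simp only [mem_sdiff, mem_union, mem_inter_iff]; tauto
  rw [hunion, measure_union _ (hC.diff hA), measure_union _ (hB.diff hC)]
  · exact disjoint_sdiff_left.mono_right sdiff_subset
  · exact Disjoint.union_left (disjoint_sdiff_right.mono_left sdiff_subset)
      (disjoint_sdiff_left.mono_right sdiff_subset)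

theorem measure_diff_cycle (hA : MeasurableSet A) (hB : MeasurableSet B)
    (hC : MeasurableSet C) :
    μ (A \ B) + μ (B \ C) + μ (C \ A) = μ (B \ A) + μ (C \ B) + μ (A \ C) := by
  rw [measure_diff_add_diff_add_diff μ hA hB hC, union_right_comm, inter_right_comm,
    ← measure_diff_add_diff_add_diff μ hA hC hB]
  ac_rfl

theorem measure_symmDiff_lt_top_trans (hAB : μ (A ∆ B) < ⊤) (hBC : μ (B ∆ C) < ⊤) :
    μ (A ∆ C) < ⊤ :=
  (measure_symmDiff_le A B C).trans_lt (ENNReal.add_lt_top.2 ⟨hAB, hBC⟩)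

theorem massTransfer_add (hA : MeasurableSet A) (hB : MeasurableSet B) (hC : MeasurableSet C)
    (hAB : μ (A ∆ B) < ⊤) (hBC : μ (B ∆ C) < ⊤) :
    massTransfer μ A B + massTransfer μ B C = massTransfer μ A C := by
  obtain ⟨hAC, hCA⟩ :=
    measure_sdiff_ne_top_of_symmDiff μ (measure_symmDiff_lt_top_trans μ hAB hBC)
  obtain ⟨hAB, hBA⟩ := measure_sdiff_ne_top_of_symmDiff μ hAB
  obtain ⟨hBC, hCB⟩ := measure_sdiff_ne_top_of_symmDiff μ hBC
  have key := congrArg ENNReal.toReal (measure_diff_cycle μ hA hB hC)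
  simp only [ENNReal.toReal_add, ENNReal.add_ne_top, hAB, hBA, hBC, hCB, hAC, hCA, ne_eq,
    not_false_eq_true, and_self] at key
  unfold massTransfer
  linarith

end MeasureTheory

theorem stmt3 {M : Type*} [MeasurableSpace M] (μ : MeasureTheory.Measure M)
    (A B C : Set M) (hA : MeasurableSet A) (hB : MeasurableSet B) (hC : MeasurableSet C)
    (hAB : μ ((A \ B) ∪ (B \ A)) < ⊤) (hBC : μ ((B \ C) ∪ (C \ B)) < ⊤) :
    μ ((A \ C) ∪ (C \ A)) < ⊤ ∧
      ((μ (A \ B)).toReal - (μ (B \ A)).toReal) +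
        ((μ (B \ C)).toReal - (μ (C \ B)).toReal) =
      (μ (A \ C)).toReal - (μ (C \ A)).toReal :=
  ⟨MeasureTheory.measure_symmDiff_lt_top_trans μ hAB hBC,
    MeasureTheory.massTransfer_add μ hA hB hC hAB hBC⟩
end

section
/- Let μ be a measure on M, h a measure-preserving bijection of (M, μ), and A, B measurable sets with μ(A Δ B) < ∞, μ(A Δ h(A)) < ∞ and μ(B Δ h(B)) < ∞, where J(X, Y) = μ(X \ Y) - μ(Y \ X). Then J(A, h(A)) = J(B, h(B)), i.e. the quantity μ(A \ h(A)) - μ(h(A) \ A) depends only on the ∼-equivalence class of A. -/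
open MeasureTheory Set

lemma sixsum {M : Type*} [MeasurableSpace M] (μ : Measure M)
    (X Y Z : Set M) (hX : MeasurableSet X) (hY : MeasurableSet Y) (hZ : MeasurableSet Z) :
    μ (X \ Y) + μ (Y \ Z) + μ (Z \ X) = μ (Y \ X) + μ (Z \ Y) + μ (X \ Z) := by
  rw [← measure_inter_add_diff (X \ Y) hZ, ← measure_inter_add_diff (Y \ Z) hX,
      ← measure_inter_add_diff (Z \ X) hY, ← measure_inter_add_diff (Y \ X) hZ,
      ← measure_inter_add_diff (Z \ Y) hX, ← measure_inter_add_diff (X \ Z) hY]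
  have e1 : (X \ Y) ∩ Z = (Z \ Y) ∩ X := by ext x; simp [mem_diff, mem_inter_iff]; tauto
  have e2 : (X \ Y) \ Z = (X \ Z) \ Y := by ext x; simp [mem_diff]; tauto
  have e3 : (Y \ Z) ∩ X = (X \ Z) ∩ Y := by ext x; simp [mem_diff, mem_inter_iff]; tauto
  have e4 : (Y \ Z) \ X = (Y \ X) \ Z := by ext x; simp [mem_diff]; tauto
  have e5 : (Z \ X) ∩ Y = (Y \ X) ∩ Z := by ext x; simp [mem_diff, mem_inter_iff]; tauto
  have e6 : (Z \ X) \ Y = (Z \ Y) \ X := by ext x; simp [mem_diff]; tauto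
  rw [e1, e2, e3, e4, e5, e6]
  ring

lemma toReal_eq6 {a b c d e f : ENNReal} (h : a + b + c = d + e + f)
    (ha : a ≠ ⊤) (hb : b ≠ ⊤) (hc : c ≠ ⊤) (hd : d ≠ ⊤) (he : e ≠ ⊤) (hf : f ≠ ⊤) :
    a.toReal + b.toReal + c.toReal = d.toReal + e.toReal + f.toReal := by
  rw [← ENNReal.toReal_add ha hb, ← ENNReal.toReal_add (ENNReal.add_ne_top.mpr ⟨ha, hb⟩) hc,
      ← ENNReal.toReal_add hd he, ← ENNReal.toReal_add (ENNReal.add_ne_top.mpr ⟨hd, he⟩) hf, h]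

theorem stmt6 {M : Type*} [MeasurableSpace M] (μ : MeasureTheory.Measure M)
    (h : M ≃ᵐ M) (hpres : MeasureTheory.Measure.map h μ = μ)
    (A B : Set M) (hA : MeasurableSet A) (hB : MeasurableSet B)
    (hAB : μ ((A \ B) ∪ (B \ A)) < ⊤)
    (hAhA : μ ((A \ (⇑h '' A)) ∪ ((⇑h '' A) \ A)) < ⊤)
    (hBhB : μ ((B \ (⇑h '' B)) ∪ ((⇑h '' B) \ B)) < ⊤) :
    (μ (A \ (⇑h '' A))).toReal - (μ ((⇑h '' A) \ A)).toReal =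
      (μ (B \ (⇑h '' B))).toReal - (μ ((⇑h '' B) \ B)).toReal := by
  have hinj : Function.Injective (⇑h) := h.injective
  -- measure preservation
  have hpre : ∀ S : Set M, μ (⇑h '' S) = μ S := by
    intro S
    conv_lhs => rw [← hpres]
    rw [MeasurableEquiv.map_apply, Set.preimage_image_eq S hinj]
  have hAm : MeasurableSet (⇑h '' A) := h.measurableSet_image.mpr hA
  have hBm : MeasurableSet (⇑h '' B) := h.measurableSet_image.mpr hB
  -- finiteness facts
  have fin : ∀ {s t : Set M}, s ⊆ t → μ t < ⊤ → μ s ≠ ⊤ :=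
    fun hsub ht => ((measure_mono hsub).trans_lt ht).ne
  have fAB : μ (A \ B) ≠ ⊤ := fin (subset_union_left) hAB
  have fBA : μ (B \ A) ≠ ⊤ := fin (subset_union_right) hAB
  have fAhA : μ (A \ ⇑h '' A) ≠ ⊤ := fin (subset_union_left) hAhA
  have fhAA : μ (⇑h '' A \ A) ≠ ⊤ := fin (subset_union_right) hAhA
  have fBhB : μ (B \ ⇑h '' B) ≠ ⊤ := fin (subset_union_left) hBhB
  have fhBB : μ (⇑h '' B \ B) ≠ ⊤ := fin (subset_union_right) hBhB
  have sub1 : B \ (⇑h '' A) ⊆ (B \ A) ∪ (A \ ⇑h '' A) := by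
    intro x hx; by_cases hxA : x ∈ A
    · exact Or.inr ⟨hxA, hx.2⟩
    · exact Or.inl ⟨hx.1, hxA⟩
  have sub2 : (⇑h '' A) \ B ⊆ (⇑h '' A \ A) ∪ (A \ B) := by
    intro x hx; by_cases hxA : x ∈ A
    · exact Or.inr ⟨hxA, hx.2⟩
    · exact Or.inl ⟨hx.1, hxA⟩
  have fBhA : μ (B \ ⇑h '' A) ≠ ⊤ :=
    fin sub1 ((measure_union_le _ _).trans_lt (ENNReal.add_lt_top.mpr
      ⟨fBA.lt_top, fAhA.lt_top⟩))
  have fhAB : μ (⇑h '' A \ B) ≠ ⊤ :=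
    fin sub2 ((measure_union_le _ _).trans_lt (ENNReal.add_lt_top.mpr
      ⟨fhAA.lt_top, fAB.lt_top⟩))
  -- image differences
  have im1 : μ (⇑h '' B \ ⇑h '' A) = μ (B \ A) := by
    rw [← Set.image_diff hinj, hpre]
  have im2 : μ (⇑h '' A \ ⇑h '' B) = μ (A \ B) := by
    rw [← Set.image_diff hinj, hpre]
  have fhBhA : μ (⇑h '' B \ ⇑h '' A) ≠ ⊤ := by rw [im1]; exact fBA
  have fhAhB : μ (⇑h '' A \ ⇑h '' B) ≠ ⊤ := by rw [im2]; exact fAB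
  -- two applications of the six-term identity
  have eq1 := toReal_eq6 (sixsum μ A B (⇑h '' A) hA hB hAm) fAB fBhA fhAA fBA fhAB fAhA
  have eq2 := toReal_eq6 (sixsum μ B (⇑h '' B) (⇑h '' A) hB hBm hAm)
    fBhB fhBhA fhAB fhBB fhAhB fBhA
  rw [im1, im2] at eq2
  linarith
end

section
/- Let μ be a measure on M and g, h two measure-preserving measurable bijections of (M, μ). Let A be measurable with μ(A Δ g(A)) < ∞ and μ(A Δ h(A)) < ∞. Then μ(A Δ (g∘h)(A)) < ∞ and J(A, (g∘h)(A)) = J(A, g(A)) + J(A, h(A)), where J(X,Y) = μ(X \ Y) - μ(Y \ X). (Homomorphism property of the end charge.) -/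
/-!
Cutting off by any finite-measure set `S` that contains `X ∆ Y` turns `J(X, Y)` into the
difference `μ(X ∩ S) - μ(Y ∩ S)` of finite numbers, so `J` is a cocycle:
`J(X, Y) + J(Y, Z) = J(X, Z)` telescopes with `S = X ∆ Y ∪ Y ∆ Z`.
A measure-preserving `g` leaves `J` invariant under `(X, Y) ↦ (g X, g Y)`, hence
`J(A, g h A) = J(A, g A) + J(g A, g h A) = J(A, g A) + J(A, h A)`.
-/

open MeasureTheory Set
open scoped symmDiff ENNReal

namespace MeasureTheory.Measure

variable {M : Type*} [MeasurableSpace M] (μ : Measure M)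

/-- `J(X, Y)` of the paper; meaningful when `μ (X ∆ Y) < ∞`, since `toReal ∞ = 0`. -/
noncomputable def relMeasure (X Y : Set M) : ℝ :=
  (μ (X \ Y)).toReal - (μ (Y \ X)).toReal

variable {μ}

lemma _root_.MeasureTheory.MeasurePreserving.measure_image_equiv {N : Type*} [MeasurableSpace N]
    {ν : Measure N} {e : M ≃ᵐ N} (he : MeasurePreserving e μ ν) (X : Set M) :
    ν (e '' X) = μ X := by
  rw [e.image_eq_preimage_symm, (he.symm e).measure_preimage_equiv]

lemma relMeasure_eq_sub_of_symmDiff_subset {X Y S : Set M} (hX : MeasurableSet X)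
    (hY : MeasurableSet Y) (hS : μ S ≠ ∞) (hXYS : X ∆ Y ⊆ S) :
    μ.relMeasure X Y = (μ (X ∩ S)).toReal - (μ (Y ∩ S)).toReal := by
  have hXS : (X ∩ S) \ Y = X \ Y := by
    ext x; have := @hXYS x; simp only [mem_symmDiff, mem_sdiff, mem_inter_iff] at this ⊢; tauto
  have hYS : (Y ∩ S) \ X = Y \ X := by
    ext x; have := @hXYS x; simp only [mem_symmDiff, mem_sdiff, mem_inter_iff] at this ⊢; tauto
  have hYSX : Y ∩ S ∩ X = X ∩ S ∩ Y := by ext; simp only [mem_inter_iff]; tauto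
  have hX' : μ (X ∩ S ∩ Y) + μ (X \ Y) = μ (X ∩ S) := hXS ▸ measure_inter_add_sdiff _ hY
  have hY' : μ (X ∩ S ∩ Y) + μ (Y \ X) = μ (Y ∩ S) :=
    hYSX ▸ hYS ▸ measure_inter_add_sdiff _ hX
  have hfin (T : Set M) : μ (T ∩ S) ≠ ∞ := measure_ne_top_of_subset inter_subset_right hS
  obtain ⟨hcap, hXY⟩ := ENNReal.add_ne_top.1 (hX' ▸ hfin X)
  obtain ⟨-, hYX⟩ := ENNReal.add_ne_top.1 (hY' ▸ hfin Y)
  rw [relMeasure, ← hX', ← hY', ENNReal.toReal_add hcap hXY, ENNReal.toReal_add hcap hYX]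
  ring

lemma relMeasure_add_relMeasure {X Y Z : Set M} (hX : MeasurableSet X) (hY : MeasurableSet Y)
    (hZ : MeasurableSet Z) (hXY : μ (X ∆ Y) ≠ ∞) (hYZ : μ (Y ∆ Z) ≠ ∞) :
    μ.relMeasure X Y + μ.relMeasure Y Z = μ.relMeasure X Z := by
  have hS : μ (X ∆ Y ∪ Y ∆ Z) ≠ ∞ := measure_union_ne_top hXY hYZ
  rw [relMeasure_eq_sub_of_symmDiff_subset hX hY hS subset_union_left,
    relMeasure_eq_sub_of_symmDiff_subset hY hZ hS subset_union_right,
    relMeasure_eq_sub_of_symmDiff_subset hX hZ hS (symmDiff_triangle X Y Z)]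
  ring

lemma relMeasure_image_equiv {N : Type*} [MeasurableSpace N] {ν : Measure N} {e : M ≃ᵐ N}
    (he : MeasurePreserving e μ ν) (X Y : Set M) :
    ν.relMeasure (e '' X) (e '' Y) = μ.relMeasure X Y := by
  simp only [relMeasure, ← image_sdiff e.injective, he.measure_image_equiv]

end MeasureTheory.Measure

open MeasureTheory.Measure

theorem stmt8_general {M : Type*} [MeasurableSpace M] (μ : MeasureTheory.Measure M)
    (g h : M ≃ᵐ M) (hg : MeasureTheory.Measure.map g μ = μ)
    (A : Set M) (hA : MeasurableSet A)
    (hgA : μ ((A \ (⇑g '' A)) ∪ ((⇑g '' A) \ A)) < ⊤)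
    (hhA : μ ((A \ (⇑h '' A)) ∪ ((⇑h '' A) \ A)) < ⊤) :
    μ ((A \ (⇑g '' (⇑h '' A))) ∪ ((⇑g '' (⇑h '' A)) \ A)) < ⊤ ∧
      (μ (A \ (⇑g '' (⇑h '' A)))).toReal - (μ ((⇑g '' (⇑h '' A)) \ A)).toReal =
        ((μ (A \ (⇑g '' A))).toReal - (μ ((⇑g '' A) \ A)).toReal) +
          ((μ (A \ (⇑h '' A))).toReal - (μ ((⇑h '' A) \ A)).toReal) := by
  have hg' : MeasurePreserving g μ μ := ⟨g.measurable, hg⟩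
  have hgh : μ ((⇑g '' A) ∆ (⇑g '' (⇑h '' A))) = μ (A ∆ (⇑h '' A)) := by
    rw [← image_symmDiff g.injective, hg'.measure_image_equiv]
  have hghA : μ ((⇑g '' A) ∆ (⇑g '' (⇑h '' A))) < ∞ := hgh ▸ hhA
  refine ⟨(measure_symmDiff_le A (⇑g '' A) _).trans_lt (ENNReal.add_lt_top.2 ⟨hgA, hghA⟩), ?_⟩
  have hcocycle := relMeasure_add_relMeasure hA (g.measurableSet_image.2 hA)
    (g.measurableSet_image.2 (h.measurableSet_image.2 hA)) hgA.ne hghA.ne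
  rw [relMeasure_image_equiv hg'] at hcocycle
  exact hcocycle.symm

theorem stmt8 {M : Type*} [MeasurableSpace M] (μ : MeasureTheory.Measure M)
    (g h : M ≃ᵐ M) (hg : MeasureTheory.Measure.map g μ = μ)
    (hh : MeasureTheory.Measure.map h μ = μ)
    (A : Set M) (hA : MeasurableSet A)
    (hgA : μ ((A \ (⇑g '' A)) ∪ ((⇑g '' A) \ A)) < ⊤)
    (hhA : μ ((A \ (⇑h '' A)) ∪ ((⇑h '' A) \ A)) < ⊤) :
    μ ((A \ (⇑g '' (⇑h '' A))) ∪ ((⇑g '' (⇑h '' A)) \ A)) < ⊤ ∧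
      (μ (A \ (⇑g '' (⇑h '' A)))).toReal - (μ ((⇑g '' (⇑h '' A)) \ A)).toReal =
        ((μ (A \ (⇑g '' A))).toReal - (μ ((⇑g '' A) \ A)).toReal) +
          ((μ (A \ (⇑h '' A))).toReal - (μ ((⇑h '' A) \ A)).toReal) :=
  stmt8_general μ g h hg A hA hgA hhA
end

section
/- Let μ be a measure on a measurable space M and suppose A is a measurable set which is the disjoint union of measurable sets N, B₁, …, B_m. Let f, g be measurable bijections of M with measurable inverses such that all the sets f⁻¹(N) Δ g⁻¹(N) and f⁻¹(B_i) Δ g⁻¹(B_i) have finite μ-measure. Then μ(f⁻¹(A) Δ g⁻¹(A)) < ∞ and J(f⁻¹(A), g⁻¹(A)) = J(f⁻¹(N), g⁻¹(N)) + Σ_{i=1}^m J(f⁻¹(B_i), g⁻¹(B_i)), where J(X,Y) = μ(X \ Y) - μ(Y \ X). -/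
/-!
Writing `J(X, Y) = ∫ (𝟙_X - 𝟙_Y) dμ`, which is legitimate as soon as `μ (X ∆ Y) < ∞`, the defect
`J` becomes additive along disjoint unions, because the indicator of a disjoint union is the sum
of the indicators. The pieces `f⁻¹(N), f⁻¹(B₁), …` (and likewise for `g`) stay disjoint, and the
symmetric difference of the unions is covered by the union of the symmetric differences.
-/

open MeasureTheory Set Function
open scoped symmDiff

lemma Set.indicator_sub_indicator {α G : Type*} [AddCommGroup G] (s t : Set α) (f : α → G) :
    s.indicator f - t.indicator f = (s \ t).indicator f - (t \ s).indicator f := by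
  rw [← sdiff_self_inter, ← sdiff_self_inter (s := t), indicator_sdiff' inter_subset_left,
    indicator_sdiff' inter_subset_left, inter_comm]
  abel

namespace MeasureTheory

variable {α : Type*} [MeasurableSpace α] {μ : Measure α}

/-- The quantity `J(s, t)`; it is only meaningful when `μ (s ∆ t) < ∞`, since `toReal ∞ = 0`. -/
noncomputable def Measure.signedSymmDiff (μ : Measure α) (s t : Set α) : ℝ :=
  μ.real (s \ t) - μ.real (t \ s)

lemma measure_iUnion_symmDiff_iUnion_lt_top {ι : Type*} [Finite ι] {s t : ι → Set α}
    (h : ∀ i, μ (s i ∆ t i) < ⊤) : μ ((⋃ i, s i) ∆ ⋃ i, t i) < ⊤ := by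
  have := Fintype.ofFinite ι
  calc μ ((⋃ i, s i) ∆ ⋃ i, t i) ≤ μ (⋃ i, s i ∆ t i) := measure_mono iUnion_symmDiff_iUnion_subset
    _ ≤ ∑ i, μ (s i ∆ t i) := measure_iUnion_fintype_le μ _
    _ < ⊤ := ENNReal.sum_lt_top.2 fun i _ => h i

variable {s t : Set α}

lemma integrable_indicator_one (hs : MeasurableSet s) (h : μ s < ⊤) :
    Integrable (s.indicator (1 : α → ℝ)) μ :=
  (integrable_indicator_iff hs).2 (integrableOn_const h.ne)

lemma integrable_indicator_one_sub_indicator_one (hs : MeasurableSet s) (ht : MeasurableSet t)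
    (h : μ (s ∆ t) < ⊤) : Integrable (s.indicator 1 - t.indicator (1 : α → ℝ)) μ := by
  rw [indicator_sub_indicator]
  exact (integrable_indicator_one (hs.diff ht) ((measure_mono subset_union_left).trans_lt h)).sub
    (integrable_indicator_one (ht.diff hs) ((measure_mono subset_union_right).trans_lt h))

lemma integral_indicator_one_sub_indicator_one (hs : MeasurableSet s) (ht : MeasurableSet t)
    (h : μ (s ∆ t) < ⊤) :
    ∫ x, (s.indicator 1 - t.indicator 1 : α → ℝ) x ∂μ = μ.signedSymmDiff s t := by
  rw [indicator_sub_indicator, integral_sub'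
    (integrable_indicator_one (hs.diff ht) ((measure_mono subset_union_left).trans_lt h))
    (integrable_indicator_one (ht.diff hs) ((measure_mono subset_union_right).trans_lt h)),
    integral_indicator_one (hs.diff ht), integral_indicator_one (ht.diff hs), Measure.signedSymmDiff]

theorem Measure.signedSymmDiff_iUnion {ι : Type*} [Fintype ι] {s t : ι → Set α}
    (hs : ∀ i, MeasurableSet (s i)) (ht : ∀ i, MeasurableSet (t i))
    (hsd : Pairwise (Disjoint on s)) (htd : Pairwise (Disjoint on t))
    (h : ∀ i, μ (s i ∆ t i) < ⊤) :
    μ.signedSymmDiff (⋃ i, s i) (⋃ i, t i) = ∑ i, μ.signedSymmDiff (s i) (t i) := by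
  have hsum : (⋃ i, s i).indicator 1 - (⋃ i, t i).indicator (1 : α → ℝ)
      = ∑ i, ((s i).indicator 1 - (t i).indicator 1) := by
    ext x
    simp [indicator_iUnion_of_pairwise_disjoint _ hsd, indicator_iUnion_of_pairwise_disjoint _ htd,
      tsum_fintype, Finset.sum_sub_distrib]
  rw [← integral_indicator_one_sub_indicator_one (.iUnion hs) (.iUnion ht)
    (measure_iUnion_symmDiff_iUnion_lt_top h), hsum]
  simp only [Finset.sum_apply]
  rw [integral_finsetSum _ fun i _ => integrable_indicator_one_sub_indicator_one (hs i) (ht i) (h i)]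
  exact Finset.sum_congr rfl fun i _ => integral_indicator_one_sub_indicator_one (hs i) (ht i) (h i)

end MeasureTheory

theorem stmt18 {M : Type*} [MeasurableSpace M] (μ : MeasureTheory.Measure M)
    (m : ℕ) (N : Set M) (B : Fin m → Set M) (A : Set M)
    (hN : MeasurableSet N) (hB : ∀ i, MeasurableSet (B i))
    (hA : A = N ∪ ⋃ i, B i)
    (hNB : ∀ i, Disjoint N (B i))
    (hBB : Pairwise fun i j => Disjoint (B i) (B j))
    (f g : M ≃ᵐ M)
    (hfinN : μ ((⇑f ⁻¹' N \ ⇑g ⁻¹' N) ∪ (⇑g ⁻¹' N \ ⇑f ⁻¹' N)) < ⊤)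
    (hfinB : ∀ i, μ ((⇑f ⁻¹' B i \ ⇑g ⁻¹' B i) ∪ (⇑g ⁻¹' B i \ ⇑f ⁻¹' B i)) < ⊤) :
    μ ((⇑f ⁻¹' A \ ⇑g ⁻¹' A) ∪ (⇑g ⁻¹' A \ ⇑f ⁻¹' A)) < ⊤ ∧
      (μ (⇑f ⁻¹' A \ ⇑g ⁻¹' A)).toReal - (μ (⇑g ⁻¹' A \ ⇑f ⁻¹' A)).toReal =
        ((μ (⇑f ⁻¹' N \ ⇑g ⁻¹' N)).toReal - (μ (⇑g ⁻¹' N \ ⇑f ⁻¹' N)).toReal) +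
          ∑ i : Fin m,
            ((μ (⇑f ⁻¹' B i \ ⇑g ⁻¹' B i)).toReal -
              (μ (⇑g ⁻¹' B i \ ⇑f ⁻¹' B i)).toReal) := by
  let C : Option (Fin m) → Set M := fun o => o.elim N B
  have hC : ∀ o, MeasurableSet (C o) := by rintro (_ | i); exacts [hN, hB i]
  have hCd : Pairwise (Disjoint on C) := by
    rintro (_ | i) (_ | j) hij
    exacts [absurd rfl hij, hNB j, (hNB i).symm, hBB fun h => hij (congrArg some h)]
  have hCfin : ∀ o, μ ((f ⁻¹' C o) ∆ (g ⁻¹' C o)) < ⊤ := by rintro (_ | i); exacts [hfinN, hfinB i]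
  have hA_pre : ∀ e : M ≃ᵐ M, e ⁻¹' A = ⋃ o, e ⁻¹' C o := fun e => by
    rw [← preimage_iUnion, iUnion_option, hA]; rfl
  refine ⟨by rw [hA_pre f, hA_pre g]; exact measure_iUnion_symmDiff_iUnion_lt_top hCfin, ?_⟩
  have := μ.signedSymmDiff_iUnion (fun o => f.measurable (hC o)) (fun o => g.measurable (hC o))
    (fun _ _ h => (hCd h).preimage f) (fun _ _ h => (hCd h).preimage g) hCfin
  rw [← hA_pre f, ← hA_pre g, Fintype.sum_option] at this
  exact this
end
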